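/- arXiv:2304.09152 — 3 statements merged into one kernel-verified Lean document; each statement's English description precedes it below -/
import Mathlib

section
/- Let u : {x ∈ ℝ³ : x₃ ≥ 0} → ℝ³ be continuously differentiable with ∑_j ∂u^j/∂x_j = 0 on {x₃ > 0} and u(x₁,x₂,0) = 0 for all (x₁,x₂) ∈ ℝ². Extend u to all of ℝ³ by the reflection principle: for x₃ < 0 set u^i(x₁,x₂,x₃) := u^i(x₁,x₂,−x₃) for i = 1,2 and u³(x₁,x₂,x₃) := −u³(x₁,x₂,−x₃). Then the extended vector field is divergence-free on ℝ³ in the sense of distributions: for every smooth compactly supported φ : ℝ³ → ℝ, ∫_{ℝ³} u(x)·∇φ(x) dx = 0. -/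
open Set MeasureTheory

/-- Partial derivative of `f : ℝ³ → ℝ` in the `i`-th coordinate direction. -/
noncomputable def pd (i : Fin 3) (f : (Fin 3 → ℝ) → ℝ) (x : Fin 3 → ℝ) : ℝ :=
  deriv (fun s => f (Function.update x i s)) (x i)

private lemma update_line (x : Fin 3 → ℝ) (i : Fin 3) (t : ℝ) :
    x + t • (Pi.single i 1 : Fin 3 → ℝ) = Function.update x i (x i + t) := by
  funext j
  rcases eq_or_ne j i with rfl | h
  · simp
  · simp [Function.update_of_ne h, Pi.single_eq_of_ne h]

private lemma hasLineDerivAt_of_update {f : (Fin 3 → ℝ) → ℝ} {i : Fin 3} {x : Fin 3 → ℝ} {a : ℝ}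
    (h : HasDerivAt (fun s => f (Function.update x i s)) a (x i)) :
    HasLineDerivAt ℝ f a x (Pi.single i 1) := by
  have h1 : HasDerivAt (fun t : ℝ => x i + t) 1 0 := by
    simpa using (hasDerivAt_id (0 : ℝ)).const_add (x i)
  have h2 : HasDerivAt ((fun s => f (Function.update x i s)) ∘ (fun t : ℝ => x i + t)) (a * 1) 0 :=
    h.comp_of_eq 0 h1 (by simp)
  have h3 : (fun t : ℝ => f (x + t • (Pi.single i 1 : Fin 3 → ℝ)))
      = (fun s => f (Function.update x i s)) ∘ (fun t : ℝ => x i + t) := by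
    funext t; simp [Function.comp, update_line]
  show HasDerivAt (fun t : ℝ => f (x + t • (Pi.single i 1 : Fin 3 → ℝ))) a 0
  rw [h3]; simpa using h2

private lemma continuous_of_le_ge {f : (Fin 3 → ℝ) → ℝ}
    (h1 : ContinuousOn f {x | 0 ≤ x 2}) (h2 : ContinuousOn f {x | x 2 ≤ 0}) :
    Continuous f := by
  refine continuous_iff_continuousAt.2 fun x => ?_
  have hc1 : IsClosed {y : Fin 3 → ℝ | 0 ≤ y 2} :=
    isClosed_le continuous_const (continuous_apply 2)
  have hc2 : IsClosed {y : Fin 3 → ℝ | y 2 ≤ 0} :=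
    isClosed_le (continuous_apply 2) continuous_const
  have hU : ContinuousWithinAt f {y | 0 ≤ y 2} x := by
    by_cases h : 0 ≤ x 2
    · exact h1.continuousWithinAt h
    · exact continuousWithinAt_of_notMem_closure (by rw [hc1.closure_eq]; exact h)
  have hL : ContinuousWithinAt f {y | y 2 ≤ 0} x := by
    by_cases h : x 2 ≤ 0
    · exact h2.continuousWithinAt h
    · exact continuousWithinAt_of_notMem_closure (by rw [hc2.closure_eq]; exact h)
  have h := hU.union hL
  rwa [show {y : Fin 3 → ℝ | 0 ≤ y 2} ∪ {y | y 2 ≤ 0} = univ from by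
    ext y; simpa using le_total 0 (y 2), continuousWithinAt_univ] at h

/-- Let `u` be `C¹` on the closed upper half-space `{x₃ ≥ 0}`,
divergence-free on the open half-space, and vanishing on the boundary `{x₃ = 0}`.
Extend it to `v` on all of `ℝ³` by the reflection principle:
`v^i(x̄) = u^i(x)` for `i = 1,2` and `v³(x̄) = −u³(x)`, where `x̄ = (x₁,x₂,−x₃)`.
Then `v` is divergence-free on `ℝ³` in the sense of distributions. -/
theorem reflected_extension_divergence_free
    (u : (Fin 3 → ℝ) → (Fin 3 → ℝ))
    (hu : ContDiffOn ℝ 1 u {x : Fin 3 → ℝ | 0 ≤ x 2})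
    (hdiv : ∀ x : Fin 3 → ℝ, 0 < x 2 → ∑ j, pd j (fun y => u y j) x = 0)
    (hbd : ∀ x : Fin 3 → ℝ, x 2 = 0 → u x = 0)
    (v : (Fin 3 → ℝ) → (Fin 3 → ℝ))
    (hv₁ : ∀ x : Fin 3 → ℝ, 0 ≤ x 2 → v x = u x)
    (hv₂ : ∀ x : Fin 3 → ℝ, x 2 < 0 → ∀ i : Fin 3,
      v x i = (if i = 2 then -1 else 1) * u (Function.update x 2 (-(x 2))) i) :
    ∀ φ : (Fin 3 → ℝ) → ℝ, ContDiff ℝ (⊤ : ℕ∞) φ → HasCompactSupport φ →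
      ∫ x : Fin 3 → ℝ, ∑ i, v x i * pd i φ x = 0 := by
  intro φ hφ hφc
  set H : Set (Fin 3 → ℝ) := {x | 0 ≤ x 2} with hHdef
  -- basic facts about the half-space
  have hHconv : Convex ℝ H := convex_halfSpace_ge ⟨fun a b => rfl, fun c a => rfl⟩ 0
  have hopen : IsOpen {x : Fin 3 → ℝ | 0 < x 2} := isOpen_lt continuous_const (continuous_apply 2)
  have hsub : {x : Fin 3 → ℝ | 0 < x 2} ⊆ H := fun x hx => le_of_lt (show 0 < x 2 from hx)
  have hUD : UniqueDiffOn ℝ H := by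
    refine uniqueDiffOn_convex hHconv ⟨fun _ => 1, ?_⟩
    refine interior_mono hsub ?_
    rw [hopen.interior_eq]
    exact (show (0:ℝ) < 1 from one_pos)
  have hnhds : ∀ y : Fin 3 → ℝ, 0 < y 2 → H ∈ nhds y := fun y hy =>
    Filter.mem_of_superset (hopen.mem_nhds hy) hsub
  -- the derivative of u within the half-space
  set D : (Fin 3 → ℝ) → (Fin 3 → ℝ) →L[ℝ] (Fin 3 → ℝ) := fun x => fderivWithin ℝ u H x with hDdef
  have hDiff : ∀ y ∈ H, HasFDerivWithinAt u (D y) H y := fun y hy =>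
    ((hu.differentiableOn one_ne_zero) y hy).hasFDerivWithinAt
  -- the folding map
  set r : (Fin 3 → ℝ) → (Fin 3 → ℝ) := fun x => Function.update x 2 |x 2| with hrdef
  have hrH : ∀ x, r x ∈ H := fun x => by
    simp only [hHdef, hrdef, mem_setOf_eq, Function.update_self]; exact abs_nonneg _
  have hr_nonneg : ∀ x : Fin 3 → ℝ, 0 ≤ x 2 → r x = x := by
    intro x hx
    simp only [hrdef, abs_of_nonneg hx]
    exact Function.update_eq_self 2 x
  have hr_neg : ∀ x : Fin 3 → ℝ, x 2 ≤ 0 → r x = Function.update x 2 (-(x 2)) := by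
    intro x hx
    show Function.update x 2 |x 2| = Function.update x 2 (-(x 2))
    rw [abs_of_nonpos hx]
  -- the candidate partial derivatives of v
  set g : Fin 3 → (Fin 3 → ℝ) → ℝ := fun i x => D (r x) (Pi.single i 1) i with hgdef
  -- continuity of g
  have hrcont : Continuous r := by
    refine continuous_pi fun j => ?_
    show Continuous fun x : Fin 3 → ℝ => Function.update x 2 |x 2| j
    rcases eq_or_ne j 2 with rfl | hj
    · simpa only [Function.update_self] using (continuous_apply (2 : Fin 3)).abs
    · simp only [Function.update_of_ne hj]
      exact continuous_apply j
  have hDcont : ContinuousOn D H := hu.continuousOn_fderivWithin hUD le_rfl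
  have hDr : Continuous fun x => D (r x) := hDcont.comp_continuous hrcont hrH
  have hgcont : ∀ i, Continuous (g i) := fun i =>
    (continuous_apply i).comp (hDr.clm_apply continuous_const)
  -- derivatives of u along coordinate lines
  have huline : ∀ (i : Fin 3), i ≠ 2 → ∀ y : Fin 3 → ℝ, 0 ≤ y 2 →
      HasDerivAt (fun s => u (Function.update y i s) i) (D y (Pi.single i 1) i) (y i) := by
    intro i hi y hy
    have hmap : Set.MapsTo (fun s : ℝ => Function.update y i s) univ H := by
      intro s _
      simp only [hHdef, mem_setOf_eq, Function.update_of_ne (Ne.symm hi)]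
      exact hy
    have h1 : HasDerivWithinAt (u ∘ fun s : ℝ => Function.update y i s)
        (D y (Pi.single i 1)) univ (y i) :=
      (hDiff y hy).comp_hasDerivWithinAt_of_eq (y i)
        (hasDerivAt_update y i (y i)).hasDerivWithinAt hmap (Function.update_eq_self i y).symm
    have h2 : HasDerivAt (u ∘ fun s : ℝ => Function.update y i s)
        (D y (Pi.single i 1)) (y i) := hasDerivWithinAt_univ.mp h1
    have h3 := (ContinuousLinearMap.proj (R := ℝ) (φ := fun _ : Fin 3 => ℝ) i).hasFDerivAt.comp_hasDerivAt
      (y i) h2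
    exact h3
  have huline2 : ∀ y : Fin 3 → ℝ, 0 < y 2 →
      HasDerivAt (fun s => u (Function.update y 2 s) 2) (D y (Pi.single 2 1) 2) (y 2) := by
    intro y hy
    have hF : HasFDerivAt u (D y) y := (hDiff y (le_of_lt hy)).hasFDerivAt (hnhds y hy)
    have h2 : HasDerivAt (u ∘ fun s : ℝ => Function.update y 2 s)
        (D y (Pi.single 2 1)) (y 2) :=
      hF.comp_hasDerivAt_of_eq (y 2) (hasDerivAt_update y 2 (y 2))
        (Function.update_eq_self 2 y).symm
    have h3 := (ContinuousLinearMap.proj (R := ℝ) (φ := fun _ : Fin 3 => ℝ) 2).hasFDerivAt.comp_hasDerivAt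
      (y 2) h2
    exact h3
  have huline3 : ∀ y : Fin 3 → ℝ, y 2 = 0 →
      HasDerivWithinAt (fun s => u (Function.update y 2 s) 2) (D y (Pi.single 2 1) 2)
        (Ici 0) 0 := by
    intro y hy
    have hyH : y ∈ H := by simp only [hHdef, mem_setOf_eq, hy, le_refl]
    have hmap : Set.MapsTo (fun s : ℝ => Function.update y 2 s) (Ici 0) H := by
      intro s hs
      simp only [hHdef, mem_setOf_eq, Function.update_self]
      exact hs
    have h1 : HasDerivWithinAt (u ∘ fun s : ℝ => Function.update y 2 s)
        (D y (Pi.single 2 1)) (Ici 0) 0 :=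
      (hDiff y hyH).comp_hasDerivWithinAt_of_eq 0
        (hasDerivAt_update y 2 0).hasDerivWithinAt hmap
        (by rw [show (0 : ℝ) = y 2 from hy.symm]; exact (Function.update_eq_self 2 y).symm)
    have h3 := (ContinuousLinearMap.proj (R := ℝ) (φ := fun _ : Fin 3 => ℝ) 2).hasFDerivAt.comp_hasDerivWithinAt
      0 h1
    exact h3
  -- the key derivative computation for v
  have hkey : ∀ (i : Fin 3) (x : Fin 3 → ℝ),
      HasDerivAt (fun s => v (Function.update x i s) i) (g i x) (x i) := by
    intro i x
    by_cases hi : i = 2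
    · subst hi
      rcases lt_trichotomy (x 2) 0 with hx | hx | hx
      · -- x 2 < 0 : reflected region
        have hry : r x = Function.update x 2 (-(x 2)) := hr_neg x (le_of_lt hx)
        have hy2 : (r x) 2 = -(x 2) := by rw [hry, Function.update_self]
        have hy2pos : 0 < (r x) 2 := by rw [hy2]; linarith
        have base := huline2 (r x) hy2pos
        rw [hy2] at base
        have hneg : HasDerivAt (fun s : ℝ => -s) (-1) (x 2) := hasDerivAt_neg (x 2)
        have comp := HasDerivAt.comp (x 2) base hneg
        have comp2 := comp.neg
        have hval : -(D (r x) (Pi.single 2 1) 2 * -1) = g 2 x := by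
          simp only [hgdef]; ring
        rw [hval] at comp2
        refine comp2.congr_of_eventuallyEq ?_
        filter_upwards [isOpen_Iio.eventually_mem hx] with s hs
        have hs' : s < 0 := hs
        have hcoord : (Function.update x 2 s) 2 = s := Function.update_self 2 s x
        have h1 := hv₂ (Function.update x 2 s) (by rw [hcoord]; exact hs') 2
        rw [h1, if_pos rfl, hcoord]
        simp only [Pi.neg_apply, Function.comp_apply]
        rw [Function.update_idem]
        rw [show Function.update (r x) 2 (-s) = Function.update x 2 (-s) from by
          rw [hry, Function.update_idem]]
        ring
      · -- x 2 = 0 : boundary gluing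
        have hrx : r x = x := hr_nonneg x (le_of_eq hx.symm)
        have hw := huline3 x hx
        -- right half
        have hright : HasDerivWithinAt (fun s => v (Function.update x 2 s) 2)
            (D x (Pi.single 2 1) 2) (Ici 0) 0 := by
          refine hw.congr ?_ ?_
          · intro s hs
            have : (0:ℝ) ≤ (Function.update x 2 s) 2 := by
              rw [Function.update_self]; exact hs
            rw [hv₁ _ this]
          · have : (0:ℝ) ≤ (Function.update x 2 (0:ℝ)) 2 := by
              rw [Function.update_self]
            rw [hv₁ _ this]
        -- left half
        have hnegw : HasDerivWithinAt (fun s : ℝ => -s) (-1) (Iic 0) 0 :=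
          (hasDerivAt_neg (0:ℝ)).hasDerivWithinAt
        have hmapneg : Set.MapsTo (fun s : ℝ => -s) (Iic 0) (Ici 0) := fun s hs => by
          simp only [mem_Ici]; simp only [mem_Iic] at hs; linarith
        have hcompL : HasDerivWithinAt ((fun s => u (Function.update x 2 s) 2) ∘ fun s : ℝ => -s)
            (D x (Pi.single 2 1) 2 * -1) (Iic 0) 0 :=
          hw.comp_of_eq 0 hnegw hmapneg (by norm_num)
        have hcompL2 := hcompL.neg
        have hval : -(D x (Pi.single 2 1) 2 * -1) = D x (Pi.single 2 1) 2 := by ring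
        rw [hval] at hcompL2
        have hleft : HasDerivWithinAt (fun s => v (Function.update x 2 s) 2)
            (D x (Pi.single 2 1) 2) (Iic 0) 0 := by
          refine hcompL2.congr ?_ ?_
          · intro s hs
            rcases lt_or_eq_of_le (show s ≤ 0 from hs) with hs' | hs'
            · have hcoord : (Function.update x 2 s) 2 = s := Function.update_self 2 s x
              have h1 := hv₂ (Function.update x 2 s) (by rw [hcoord]; exact hs') 2
              rw [h1, if_pos rfl, hcoord]
              simp only [Pi.neg_apply, Function.comp_apply]
              rw [Function.update_idem]
              ring
            · subst hs'
              have h0 : (0:ℝ) ≤ (Function.update x 2 (0:ℝ)) 2 := by rw [Function.update_self]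
              rw [hv₁ _ h0]
              have hx0 : Function.update x 2 (0:ℝ) = x := by
                rw [show (0:ℝ) = x 2 from hx.symm]; exact Function.update_eq_self 2 x
              simp only [Function.comp, neg_zero, hx0, hbd x hx]
              simp [hx0, hbd x hx]
          · have h0 : (0:ℝ) ≤ (Function.update x 2 (0:ℝ)) 2 := by rw [Function.update_self]
            rw [hv₁ _ h0]
            have hx0 : Function.update x 2 (0:ℝ) = x := by
              rw [show (0:ℝ) = x 2 from hx.symm]; exact Function.update_eq_self 2 x
            simp only [Function.comp, neg_zero, hx0, hbd x hx]
            simp [hx0, hbd x hx]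
        have hunion := hleft.union hright
        rw [Iic_union_Ici, hasDerivWithinAt_univ] at hunion
        rw [hgdef]
        simp only [hrx]
        rw [hx]
        exact hunion
      · -- 0 < x 2 : interior of upper half space
        have hrx : r x = x := hr_nonneg x (le_of_lt hx)
        have base := huline2 x hx
        have hg2 : g 2 x = D x (Pi.single 2 1) 2 := by rw [hgdef]; simp only [hrx]
        rw [hg2]
        refine base.congr_of_eventuallyEq ?_
        filter_upwards [isOpen_Ioi.eventually_mem hx] with s hs
        have : (0:ℝ) ≤ (Function.update x 2 s) 2 := by
          rw [Function.update_self]; exact le_of_lt hs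
        rw [hv₁ _ this]
    · -- i ≠ 2
      by_cases hx : 0 ≤ x 2
      · have hrx : r x = x := hr_nonneg x hx
        have h := huline i hi x hx
        have hfeq : (fun s => v (Function.update x i s) i)
            = fun s => u (Function.update x i s) i := by
          funext s
          have : (0:ℝ) ≤ (Function.update x i s) 2 := by
            rw [Function.update_of_ne (Ne.symm hi)]; exact hx
          rw [hv₁ _ this]
        rw [hfeq, hgdef]
        simp only [hrx]
        exact h
      · push_neg at hx
        have hry : r x = Function.update x 2 (-(x 2)) := hr_neg x (le_of_lt hx)
        have hy2 : 0 ≤ (r x) 2 := (hrH x : 0 ≤ (r x) 2)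
        have hyi : (r x) i = x i := by rw [hry, Function.update_of_ne hi]
        have h := huline i hi (r x) hy2
        rw [hyi] at h
        have hfeq : (fun s => v (Function.update x i s) i)
            = fun s => u (Function.update (r x) i s) i := by
          funext s
          have hc : (Function.update x i s) 2 = x 2 := Function.update_of_ne (Ne.symm hi) s x
          have h1 := hv₂ (Function.update x i s) (by rw [hc]; exact hx) i
          rw [h1, if_neg hi, one_mul, hc]
          congr 1
          rw [hry, Function.update_comm (show i ≠ 2 from hi)]
        rw [hfeq]
        exact h
  -- continuity of the components of v
  have hvcont : ∀ i, Continuous fun x => v x i := by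
    intro i
    refine continuous_of_le_ge ?_ ?_
    · refine ContinuousOn.congr ((continuous_apply i).comp_continuousOn hu.continuousOn) ?_
      intro x hx
      show v x i = u x i
      rw [hv₁ x hx]
    · have hρ : Continuous fun x : Fin 3 → ℝ => Function.update x 2 (-(x 2)) := by
        refine continuous_pi fun j => ?_
        rcases eq_or_ne j 2 with rfl | hj
        · simp only [Function.update_self]; exact (continuous_apply (2 : Fin 3)).neg
        · simp only [Function.update_of_ne hj]; exact continuous_apply j
      have hmaps : Set.MapsTo (fun x : Fin 3 → ℝ => Function.update x 2 (-(x 2)))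
          {x | x 2 ≤ 0} H := by
        intro x hx
        simp only [hHdef, mem_setOf_eq, Function.update_self]
        simp only [mem_setOf_eq] at hx; linarith
      have hbase : ContinuousOn
          (fun x : Fin 3 → ℝ => u (Function.update x 2 (-(x 2))) i) {x | x 2 ≤ 0} :=
        (continuous_apply i).comp_continuousOn
          (hu.continuousOn.comp hρ.continuousOn hmaps)
      have hcont2 : ContinuousOn
          (fun x : Fin 3 → ℝ => (if i = 2 then (-1:ℝ) else 1) *
            u (Function.update x 2 (-(x 2))) i) {x | x 2 ≤ 0} :=
        continuousOn_const.mul hbase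
      refine hcont2.congr ?_
      intro x hx
      show v x i = (if i = 2 then (-1:ℝ) else 1) * u (Function.update x 2 (-(x 2))) i
      simp only [mem_setOf_eq] at hx
      rcases lt_or_eq_of_le hx with hx' | hx'
      · exact hv₂ x hx' i
      · have hueq := hbd x hx'
        have hx0 : Function.update x 2 (-(x 2)) = x := by
          rw [hx', neg_zero, show (0:ℝ) = x 2 from hx'.symm]
          exact Function.update_eq_self 2 x
        rw [hv₁ x (le_of_eq hx'.symm), hx0, hueq]
        simp
  -- properties of pd i φ
  have hφd : Differentiable ℝ φ := hφ.differentiable (by simp)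
  have hpd_eq : ∀ (i : Fin 3) (x : Fin 3 → ℝ), pd i φ x = fderiv ℝ φ x (Pi.single i 1) := by
    intro i x
    have h2 : HasDerivAt (φ ∘ fun s : ℝ => Function.update x i s)
        (fderiv ℝ φ x (Pi.single i 1)) (x i) :=
      (hφd x).hasFDerivAt.comp_hasDerivAt_of_eq (x i) (hasDerivAt_update x i (x i))
        (Function.update_eq_self i x).symm
    exact h2.deriv
  have hpdφ_eq : ∀ i : Fin 3, pd i φ = fun x => fderiv ℝ φ x (Pi.single i 1) := fun i =>
    funext (hpd_eq i)
  have hpdcont : ∀ i, Continuous (pd i φ) := by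
    intro i; rw [hpdφ_eq i]
    exact (hφ.continuous_fderiv (by simp)).clm_apply continuous_const
  have hpdsupp : ∀ i, HasCompactSupport (pd i φ) := by
    intro i; rw [hpdφ_eq i]
    exact hφc.fderiv_apply ℝ (Pi.single i 1)
  -- integrability
  have I1 : ∀ i, Integrable (fun x => v x i * pd i φ x) := by
    intro i
    exact ((hvcont i).mul (hpdcont i)).integrable_of_hasCompactSupport
      ((hpdsupp i).mul_left)
  have I2 : ∀ i, Integrable (fun x => g i x * φ x) := by
    intro i
    exact ((hgcont i).mul hφ.continuous).integrable_of_hasCompactSupport (hφc.mul_left)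
  have I3 : ∀ i, Integrable (fun x => v x i * φ x) := by
    intro i
    exact ((hvcont i).mul hφ.continuous).integrable_of_hasCompactSupport (hφc.mul_left)
  -- integration by parts per direction
  have hIBP : ∀ i : Fin 3, ∫ x, v x i * pd i φ x = -∫ x, g i x * φ x := by
    intro i
    have hf : ∀ x, HasLineDerivAt ℝ (fun y => v y i) (g i x) x (Pi.single i 1) := fun x =>
      hasLineDerivAt_of_update (hkey i x)
    have hg' : ∀ x, HasLineDerivAt ℝ φ (pd i φ x) x (Pi.single i 1) := by
      intro x
      have h := (hφd x).hasFDerivAt.hasLineDerivAt (Pi.single i 1)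
      rwa [← hpd_eq i x] at h
    have h := integral_bilinear_hasLineDerivAt_right_eq_neg_left_of_integrable
      (μ := (volume : Measure (Fin 3 → ℝ))) (B := ContinuousLinearMap.mul ℝ ℝ)
      (f := fun y => v y i) (f' := g i) (g := φ) (g' := pd i φ)
      (I2 i) (I1 i) (I3 i) (fun x _ => hf x) (fun x _ => hg' x)
    simpa using h
  -- divergence of v vanishes off the hyperplane
  have hdiv_ae : ∀ x : Fin 3 → ℝ, x 2 ≠ 0 → ∑ i, g i x = 0 := by
    intro x hx
    rcases lt_or_gt_of_ne hx with hx' | hx'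
    · have hry : r x = Function.update x 2 (-(x 2)) := hr_neg x (le_of_lt hx')
      have hy2 : 0 < (r x) 2 := by rw [hry, Function.update_self]; linarith
      have hsum := hdiv (r x) hy2
      rw [← hsum]
      refine Finset.sum_congr rfl fun i _ => ?_
      rcases eq_or_ne i 2 with rfl | hi
      · exact ((huline2 (r x) hy2).deriv).symm
      · exact ((huline i hi (r x) (le_of_lt hy2)).deriv).symm
    · have hrx : r x = x := hr_nonneg x (le_of_lt hx')
      have hsum := hdiv x hx'
      rw [← hsum]
      refine Finset.sum_congr rfl fun i _ => ?_
      rcases eq_or_ne i 2 with rfl | hi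
      · rw [hgdef]; simp only [hrx]
        exact ((huline2 x hx').deriv).symm
      · rw [hgdef]; simp only [hrx]
        exact ((huline i hi x (le_of_lt hx')).deriv).symm
  -- the hyperplane is null
  have hnull : (volume : Measure (Fin 3 → ℝ)) {x | x 2 = 0} = 0 := by
    have h := MeasureTheory.Measure.pi_hyperplane (fun _ : Fin 3 => (volume : Measure ℝ)) 2 (0:ℝ)
    simpa [MeasureTheory.volume_pi] using h
  -- conclusion
  calc ∫ x : Fin 3 → ℝ, ∑ i, v x i * pd i φ x
      = ∑ i : Fin 3, ∫ x, v x i * pd i φ x :=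
        integral_finset_sum _ fun i _ => I1 i
    _ = ∑ i : Fin 3, -∫ x, g i x * φ x := Finset.sum_congr rfl fun i _ => hIBP i
    _ = -∫ x, ∑ i : Fin 3, g i x * φ x := by
        rw [integral_finset_sum _ fun i _ => I2 i]
        exact Finset.sum_neg_distrib _
    _ = 0 := by
        have : ∫ x, ∑ i : Fin 3, g i x * φ x = ∫ x : Fin 3 → ℝ, (0:ℝ) := by
          refine integral_congr_ae ?_
          filter_upwards [compl_mem_ae_iff.2 hnull] with x hx
          have hx' : x 2 ≠ 0 := hx
          rw [← Finset.sum_mul, hdiv_ae x hx', zero_mul]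
        rw [this, integral_zero, neg_zero]
end

section
/- Let D = ℝ² ∖ {(x₁,0) : x₁ ≥ 0} be the slit plane and let u : ℝ² → ℝ² be continuous, with u vanishing on the slit {(x₁,0) : x₁ ≥ 0}. Assume u is C¹ on D with ∂u¹/∂x₁ + ∂u²/∂x₂ = 0 on D, and that the restrictions of u to the closed upper half-plane {x₂ ≥ 0} and the closed lower half-plane {x₂ ≤ 0} are each C¹ up to the boundary. Then u is divergence-free on all of ℝ² in the sense of distributions: for every smooth compactly supported φ : ℝ² → ℝ, ∫_{ℝ²} u(x)·∇φ(x) dx = 0. -/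
open Set MeasureTheory Filter Topology

/-- Partial derivative in the first coordinate of a function on `ℝ²`. -/
noncomputable def pd1 (f : ℝ × ℝ → ℝ) (p : ℝ × ℝ) : ℝ := deriv (fun s => f (s, p.2)) p.1

/-- Partial derivative in the second coordinate of a function on `ℝ²`. -/
noncomputable def pd2 (f : ℝ × ℝ → ℝ) (p : ℝ × ℝ) : ℝ := deriv (fun s => f (p.1, s)) p.2

/-- The slit plane `D = ℝ² ∖ {(x₁,0) : x₁ ≥ 0}`. -/
def slitPlane : Set (ℝ × ℝ) := {x : ℝ × ℝ | ¬ (0 ≤ x.1 ∧ x.2 = 0)}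

private lemma tendsto_zero_of_hcs {g : ℝ → ℝ} (hcs : HasCompactSupport g) :
    Tendsto g atTop (𝓝 0) ∧ Tendsto g atBot (𝓝 0) := by
  obtain ⟨r, hr⟩ := hcs.isBounded.subset_closedBall 0
  have hzero : ∀ s : ℝ, r < |s| → g s = 0 := by
    intro s hs
    apply image_eq_zero_of_notMem_tsupport
    intro h
    have : |s| ≤ r := by simpa [Real.dist_eq] using hr h
    linarith
  have h1 : Tendsto g atTop (𝓝 0) := by
    refine Tendsto.congr' ?_ tendsto_const_nhds
    filter_upwards [eventually_gt_atTop r, eventually_gt_atTop 0] with s hs hs0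
    exact (hzero s (by rw [abs_of_pos hs0]; exact hs)).symm
  have h2 : Tendsto g atBot (𝓝 0) := by
    refine Tendsto.congr' ?_ tendsto_const_nhds
    filter_upwards [eventually_lt_atBot (-r), eventually_lt_atBot 0] with s hs hs0
    exact (hzero s (by rw [abs_of_neg hs0]; linarith)).symm
  exact ⟨h1, h2⟩

private lemma integral_deriv_zero (g g' : ℝ → ℝ) (hg : Continuous g)
    (hcs : HasCompactSupport g)
    (hd : ∀ s : ℝ, s ≠ 0 → HasDerivAt g (g' s) s)
    (h1 : IntegrableOn g' (Set.Ioi 0)) (h2 : IntegrableOn g' (Set.Iic 0)) :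
    ∫ s, g' s = 0 := by
  obtain ⟨ht, hb⟩ := tendsto_zero_of_hcs hcs
  have e1 : ∫ s in Set.Ioi (0:ℝ), g' s = 0 - g 0 :=
    integral_Ioi_of_hasDerivAt_of_tendsto hg.continuousWithinAt
      (fun x hx => hd x (ne_of_gt hx)) h1 ht
  have e2 : ∫ s in Set.Iic (0:ℝ), g' s = g 0 - 0 :=
    integral_Iic_of_hasDerivAt_of_tendsto hg.continuousWithinAt
      (fun x hx => hd x (ne_of_lt hx)) h2 hb
  rw [← intervalIntegral.integral_Iic_add_Ioi h2 h1, e1, e2]; ring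

private lemma isClosedEmbedding_line_h (y : ℝ) :
    Topology.IsClosedEmbedding (fun s : ℝ => ((s, y) : ℝ × ℝ)) := by
  have : Isometry (fun s : ℝ => ((s, y) : ℝ × ℝ)) := by
    apply Isometry.of_dist_eq
    intro a b
    simp [Prod.dist_eq, dist_nonneg]
  exact this.isClosedEmbedding

private lemma isClosedEmbedding_line_v (x : ℝ) :
    Topology.IsClosedEmbedding (fun s : ℝ => ((x, s) : ℝ × ℝ)) := by
  have : Isometry (fun s : ℝ => ((x, s) : ℝ × ℝ)) := by
    apply Isometry.of_dist_eq
    intro a b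
    simp [Prod.dist_eq, dist_nonneg]
  exact this.isClosedEmbedding

/-- Let `u : ℝ² → ℝ²` be continuous, vanishing on the slit
`{(x₁,0) : x₁ ≥ 0}` (no-slip), `C¹` and divergence-free on the slit plane `D`, and with
restrictions to the closed upper and lower half-planes each `C¹` up to the boundary.
Then `u` is divergence-free on all of `ℝ²` in the sense of distributions. -/
theorem slit_plane_extension_divergence_free
    (u : ℝ × ℝ → ℝ × ℝ)
    (hcont : Continuous u)
    (hslip : ∀ x₁ : ℝ, 0 ≤ x₁ → u (x₁, 0) = 0)
    (hC1 : ContDiffOn ℝ 1 u slitPlane)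
    (hdiv : ∀ x ∈ slitPlane, pd1 (fun y => (u y).1) x + pd2 (fun y => (u y).2) x = 0)
    (hupper : ContDiffOn ℝ 1 u {x : ℝ × ℝ | 0 ≤ x.2})
    (hlower : ContDiffOn ℝ 1 u {x : ℝ × ℝ | x.2 ≤ 0}) :
    ∀ φ : ℝ × ℝ → ℝ, ContDiff ℝ (⊤ : ℕ∞) φ → HasCompactSupport φ →
      ∫ x : ℝ × ℝ, ((u x).1 * pd1 φ x + (u x).2 * pd2 φ x) = 0 := by
  intro φ hφ hφc
  -- basic topology of the slit plane
  have hDopen : IsOpen slitPlane := by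
    have hcl : IsClosed {x : ℝ × ℝ | 0 ≤ x.1 ∧ x.2 = 0} :=
      (isClosed_le continuous_const continuous_fst).inter
        (isClosed_eq continuous_snd continuous_const)
    exact hcl.isOpen_compl
  -- a.e. membership in the slit plane
  have hae : ∀ᵐ p : ℝ × ℝ, p ∈ slitPlane := by
    rw [ae_iff]
    have h0 : (volume : Measure (ℝ × ℝ)) {p : ℝ × ℝ | p.2 = 0} = 0 := by
      have he : {p : ℝ × ℝ | p.2 = 0} = (univ : Set ℝ) ×ˢ ({0} : Set ℝ) := by
        ext p; exact ⟨fun h => ⟨trivial, h⟩, fun h => h.2⟩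
      rw [he, Measure.volume_eq_prod, Measure.prod_prod]
      simp
    refine measure_mono_null (fun p hp => ?_) h0
    simp only [slitPlane, mem_setOf_eq, not_not] at hp
    exact hp.2
  -- differentiability on the slit plane
  have hdiffD : ∀ p ∈ slitPlane, DifferentiableAt ℝ u p := fun p hp =>
    (hC1.differentiableOn one_ne_zero).differentiableAt (hDopen.mem_nhds hp)
  -- line derivatives of u on the slit plane
  have hlineu1 : ∀ p ∈ slitPlane,
      HasDerivAt (fun s => (u (s, p.2)).1) ((fderiv ℝ u p (1, 0)).1) p.1 := by
    intro p hp
    have hL : HasDerivAt (fun s : ℝ => ((s, p.2) : ℝ × ℝ)) ((1:ℝ), (0:ℝ)) p.1 :=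
      (hasDerivAt_id p.1).prodMk (hasDerivAt_const p.1 p.2)
    have h1 : HasDerivAt (fun s : ℝ => u (s, p.2)) (fderiv ℝ u p (1, 0)) p.1 :=
      (hdiffD p hp).hasFDerivAt.comp_hasDerivAt p.1 hL
    simpa [Function.comp_def] using ((ContinuousLinearMap.fst ℝ ℝ ℝ).hasFDerivAt.comp_hasDerivAt p.1 h1)
  have hlineu2 : ∀ p ∈ slitPlane,
      HasDerivAt (fun s => (u (p.1, s)).2) ((fderiv ℝ u p (0, 1)).2) p.2 := by
    intro p hp
    have hL : HasDerivAt (fun s : ℝ => ((p.1, s) : ℝ × ℝ)) ((0:ℝ), (1:ℝ)) p.2 :=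
      (hasDerivAt_const p.2 p.1).prodMk (hasDerivAt_id p.2)
    have h1 : HasDerivAt (fun s : ℝ => u (p.1, s)) (fderiv ℝ u p (0, 1)) p.2 :=
      (hdiffD p hp).hasFDerivAt.comp_hasDerivAt p.2 hL
    simpa [Function.comp_def] using ((ContinuousLinearMap.snd ℝ ℝ ℝ).hasFDerivAt.comp_hasDerivAt p.2 h1)
  have hpdu1 : ∀ p ∈ slitPlane,
      pd1 (fun y => (u y).1) p = (fderiv ℝ u p (1, 0)).1 := fun p hp =>
    (hlineu1 p hp).deriv
  have hpdu2 : ∀ p ∈ slitPlane,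
      pd2 (fun y => (u y).2) p = (fderiv ℝ u p (0, 1)).2 := fun p hp =>
    (hlineu2 p hp).deriv
  -- line derivatives of φ, everywhere
  have hφdiff : ∀ p : ℝ × ℝ, DifferentiableAt ℝ φ p := fun p =>
    (hφ.differentiable (by simp)).differentiableAt
  have hφline1 : ∀ p : ℝ × ℝ,
      HasDerivAt (fun s => φ (s, p.2)) (fderiv ℝ φ p (1, 0)) p.1 := by
    intro p
    have hL : HasDerivAt (fun s : ℝ => ((s, p.2) : ℝ × ℝ)) ((1:ℝ), (0:ℝ)) p.1 :=
      (hasDerivAt_id p.1).prodMk (hasDerivAt_const p.1 p.2)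
    exact (hφdiff p).hasFDerivAt.comp_hasDerivAt p.1 hL
  have hφline2 : ∀ p : ℝ × ℝ,
      HasDerivAt (fun s => φ (p.1, s)) (fderiv ℝ φ p (0, 1)) p.2 := by
    intro p
    have hL : HasDerivAt (fun s : ℝ => ((p.1, s) : ℝ × ℝ)) ((0:ℝ), (1:ℝ)) p.2 :=
      (hasDerivAt_const p.2 p.1).prodMk (hasDerivAt_id p.2)
    exact (hφdiff p).hasFDerivAt.comp_hasDerivAt p.2 hL
  have hpdφ1 : ∀ p : ℝ × ℝ, pd1 φ p = fderiv ℝ φ p (1, 0) := fun p => (hφline1 p).deriv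
  have hpdφ2 : ∀ p : ℝ × ℝ, pd2 φ p = fderiv ℝ φ p (0, 1) := fun p => (hφline2 p).deriv
  -- continuity and support of the partial derivatives of φ
  have hfdφcont : Continuous (fderiv ℝ φ) := hφ.continuous_fderiv (by simp)
  have hpdφ1cont : Continuous (pd1 φ) := by
    rw [funext hpdφ1]
    exact (ContinuousLinearMap.apply ℝ ℝ ((1:ℝ), (0:ℝ))).continuous.comp hfdφcont
  have hpdφ2cont : Continuous (pd2 φ) := by
    rw [funext hpdφ2]
    exact (ContinuousLinearMap.apply ℝ ℝ ((0:ℝ), (1:ℝ))).continuous.comp hfdφcont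
  have hpdφzero : ∀ p : ℝ × ℝ, p ∉ tsupport φ → pd1 φ p = 0 ∧ pd2 φ p = 0 := by
    intro p hp
    have h0 : fderiv ℝ φ p = 0 := by
      by_contra h
      exact hp (support_fderiv_subset ℝ (by simpa [Function.mem_support] using h))
    constructor
    · rw [hpdφ1 p, h0]; rfl
    · rw [hpdφ2 p, h0]; rfl
  -- the main integrands
  set W1 : ℝ × ℝ → ℝ := fun p => pd1 (fun y => (u y).1) p * φ p with hW1def
  set W2 : ℝ × ℝ → ℝ := fun p => pd2 (fun y => (u y).2) p * φ p with hW2def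
  set T1 : ℝ × ℝ → ℝ := fun p => (u p).1 * pd1 φ p with hT1def
  set T2 : ℝ × ℝ → ℝ := fun p => (u p).2 * pd2 φ p with hT2def
  -- integrability of T1 and T2
  have hIT1 : Integrable T1 := by
    apply Continuous.integrable_of_hasCompactSupport
    · exact (hcont.fst).mul hpdφ1cont
    · exact HasCompactSupport.intro hφc (fun p hp => by
        simp [hT1def, (hpdφzero p hp).1])
  have hIT2 : Integrable T2 := by
    apply Continuous.integrable_of_hasCompactSupport
    · exact (hcont.snd).mul hpdφ2cont
    · exact HasCompactSupport.intro hφc (fun p hp => by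
        simp [hT2def, (hpdφzero p hp).2])
  -- bound on the derivative of u on the support of φ
  have hconvU : Convex ℝ {x : ℝ × ℝ | 0 ≤ x.2} := by
    intro x hx y hy a b ha hb hab
    have : (0:ℝ) ≤ a * x.2 + b * y.2 :=
      add_nonneg (mul_nonneg ha hx) (mul_nonneg hb hy)
    exact this
  have hconvL : Convex ℝ {x : ℝ × ℝ | x.2 ≤ 0} := by
    intro x hx y hy a b ha hb hab
    have hx' : x.2 ≤ 0 := hx
    have hy' : y.2 ≤ 0 := hy
    have : a * x.2 + b * y.2 ≤ (0:ℝ) := by nlinarith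
    exact this
  have hintU : (interior {x : ℝ × ℝ | 0 ≤ x.2}).Nonempty := by
    have hsub : {x : ℝ × ℝ | 0 < x.2} ⊆ {x : ℝ × ℝ | 0 ≤ x.2} := fun x hx => show (0:ℝ) ≤ x.2 from le_of_lt hx
    have h := interior_maximal hsub (isOpen_lt continuous_const continuous_snd)
    exact ⟨((0:ℝ), (1:ℝ)), h (show (0:ℝ) < (1:ℝ) by norm_num)⟩
  have hintL : (interior {x : ℝ × ℝ | x.2 ≤ 0}).Nonempty := by
    have hsub : {x : ℝ × ℝ | x.2 < 0} ⊆ {x : ℝ × ℝ | x.2 ≤ 0} := fun x hx => show x.2 ≤ (0:ℝ) from le_of_lt hx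
    have h := interior_maximal hsub (isOpen_lt continuous_snd continuous_const)
    exact ⟨((0:ℝ), (-1:ℝ)), h (show (-1:ℝ) < (0:ℝ) by norm_num)⟩
  have hUU : UniqueDiffOn ℝ {x : ℝ × ℝ | 0 ≤ x.2} := uniqueDiffOn_convex hconvU hintU
  have hUL : UniqueDiffOn ℝ {x : ℝ × ℝ | x.2 ≤ 0} := uniqueDiffOn_convex hconvL hintL
  have hKU : IsCompact (tsupport φ ∩ {x : ℝ × ℝ | 0 ≤ x.2}) :=
    hφc.inter_right (isClosed_le continuous_const continuous_snd)
  have hKL : IsCompact (tsupport φ ∩ {x : ℝ × ℝ | x.2 ≤ 0}) :=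
    hφc.inter_right (isClosed_le continuous_snd continuous_const)
  obtain ⟨MU, hMU⟩ := hKU.exists_bound_of_continuousOn
    ((hupper.continuousOn_fderivWithin hUU le_rfl).mono inter_subset_right)
  obtain ⟨ML, hML⟩ := hKL.exists_bound_of_continuousOn
    ((hlower.continuousOn_fderivWithin hUL le_rfl).mono inter_subset_right)
  set M : ℝ := max (max MU ML) 0 with hMdef
  have hMnn : (0:ℝ) ≤ M := le_max_right _ _
  have hfb : ∀ p ∈ tsupport φ, ‖fderiv ℝ u p‖ ≤ M := by
    intro p hp
    by_cases hdp : DifferentiableAt ℝ u p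
    · rcases le_or_gt 0 p.2 with h2 | h2
      · have he : fderivWithin ℝ u {x : ℝ × ℝ | 0 ≤ x.2} p = fderiv ℝ u p :=
          hdp.fderivWithin (hUU p h2)
        calc ‖fderiv ℝ u p‖ = ‖fderivWithin ℝ u {x : ℝ × ℝ | 0 ≤ x.2} p‖ := by rw [he]
          _ ≤ MU := hMU p ⟨hp, h2⟩
          _ ≤ M := le_trans (le_max_left _ _) (le_max_left _ _)
      · have he : fderivWithin ℝ u {x : ℝ × ℝ | x.2 ≤ 0} p = fderiv ℝ u p :=
          hdp.fderivWithin (hUL p (le_of_lt h2))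
        calc ‖fderiv ℝ u p‖ = ‖fderivWithin ℝ u {x : ℝ × ℝ | x.2 ≤ 0} p‖ := by rw [he]
          _ ≤ ML := hML p ⟨hp, le_of_lt h2⟩
          _ ≤ M := le_trans (le_max_right _ _) (le_max_left _ _)
    · rw [fderiv_zero_of_not_differentiableAt hdp]
      simpa using hMnn
  -- bound on φ
  obtain ⟨Cφ, hCφ⟩ := hφc.exists_bound_of_continuous hφ.continuous
  have hCφnn : (0:ℝ) ≤ Cφ := le_trans (norm_nonneg _) (hCφ (0, 0))
  set C : ℝ := M * Cφ with hCdef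
  -- pointwise bounds on W1 and W2
  have hbW : ∀ p ∈ slitPlane, |W1 p| ≤ (tsupport φ).indicator (fun _ => C) p ∧
      |W2 p| ≤ (tsupport φ).indicator (fun _ => C) p := by
    intro p hp
    by_cases hpK : p ∈ tsupport φ
    · rw [indicator_of_mem hpK]
      have hkey : ∀ v : ℝ × ℝ, ‖v‖ ≤ 1 → ∀ w : ℝ, |w| ≤ ‖fderiv ℝ u p v‖ →
          |w * φ p| ≤ C := by
        intro v hv w hw
        rw [abs_mul]
        have h1 : |w| ≤ M := by
          calc |w| ≤ ‖fderiv ℝ u p v‖ := hw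
            _ ≤ ‖fderiv ℝ u p‖ * ‖v‖ := (fderiv ℝ u p).le_opNorm v
            _ ≤ ‖fderiv ℝ u p‖ * 1 := by
                exact mul_le_mul_of_nonneg_left hv (norm_nonneg _)
            _ = ‖fderiv ℝ u p‖ := mul_one _
            _ ≤ M := hfb p hpK
        calc |w| * |φ p| ≤ M * Cφ := by
              exact mul_le_mul h1 (by simpa using hCφ p) (abs_nonneg _) hMnn
          _ = C := rfl
      constructor
      · rw [hW1def]
        simp only []
        rw [hpdu1 p hp]
        refine hkey ((1:ℝ), (0:ℝ)) (by simp [Prod.norm_def]) _ ?_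
        rw [← Real.norm_eq_abs]
        exact norm_fst_le _
      · rw [hW2def]
        simp only []
        rw [hpdu2 p hp]
        refine hkey ((0:ℝ), (1:ℝ)) (by simp [Prod.norm_def]) _ ?_
        rw [← Real.norm_eq_abs]
        exact norm_snd_le _
    · rw [indicator_of_notMem hpK]
      have hφ0 : φ p = 0 := image_eq_zero_of_notMem_tsupport hpK
      constructor
      · simp [hW1def, hφ0]
      · simp [hW2def, hφ0]
  -- integrable dominating function
  have hdom : Integrable ((tsupport φ).indicator (fun _ => C)) := by
    rw [integrable_indicator_iff (isClosed_tsupport φ).measurableSet]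
    exact integrableOn_const hφc.measure_lt_top.ne
  -- integrability of W1 and W2
  have hmW1 : AEStronglyMeasurable W1 volume := by
    have hm : Measurable fun p : ℝ × ℝ => (fderiv ℝ u p ((1:ℝ), (0:ℝ))).1 * φ p :=
      (measurable_fst.comp (measurable_fderiv_apply_const ℝ u _)).mul
        hφ.continuous.measurable
    refine hm.aestronglyMeasurable.congr ?_
    filter_upwards [hae] with p hp
    simp only [hW1def]
    rw [hpdu1 p hp]
  have hmW2 : AEStronglyMeasurable W2 volume := by
    have hm : Measurable fun p : ℝ × ℝ => (fderiv ℝ u p ((0:ℝ), (1:ℝ))).2 * φ p :=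
      (measurable_snd.comp (measurable_fderiv_apply_const ℝ u _)).mul
        hφ.continuous.measurable
    refine hm.aestronglyMeasurable.congr ?_
    filter_upwards [hae] with p hp
    simp only [hW2def]
    rw [hpdu2 p hp]
  have hIW1 : Integrable W1 := by
    refine hdom.mono' hmW1 ?_
    filter_upwards [hae] with p hp
    rw [Real.norm_eq_abs]
    exact (hbW p hp).1
  have hIW2 : Integrable W2 := by
    refine hdom.mono' hmW2 ?_
    filter_upwards [hae] with p hp
    rw [Real.norm_eq_abs]
    exact (hbW p hp).2
  -- compact support of line slices of φ
  have hφsliceh : ∀ y : ℝ, HasCompactSupport (fun s => φ (s, y)) := fun y =>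
    hφc.comp_isClosedEmbedding (isClosedEmbedding_line_h y)
  have hφslicev : ∀ x : ℝ, HasCompactSupport (fun s => φ (x, s)) := fun x =>
    hφc.comp_isClosedEmbedding (isClosedEmbedding_line_v x)
  -- product measure versions of integrability
  have hIT1' : Integrable T1 ((volume : Measure ℝ).prod volume) := by
    rwa [← Measure.volume_eq_prod]
  have hIW1' : Integrable W1 ((volume : Measure ℝ).prod volume) := by
    rwa [← Measure.volume_eq_prod]
  have hIT2' : Integrable T2 ((volume : Measure ℝ).prod volume) := by
    rwa [← Measure.volume_eq_prod]
  have hIW2' : Integrable W2 ((volume : Measure ℝ).prod volume) := by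
    rwa [← Measure.volume_eq_prod]
  -- first integration by parts : over x₁ for a.e. x₂
  have hE1 : ∫ p, T1 p = - ∫ p, W1 p := by
    rw [Measure.volume_eq_prod, integral_prod_symm _ hIT1', integral_prod_symm _ hIW1',
      ← integral_neg]
    apply integral_congr_ae
    have hy0 : ∀ᵐ y : ℝ, y ≠ 0 := by
      rw [ae_iff]
      simp [not_not, Set.setOf_eq_eq_singleton]
    filter_upwards [hy0, hIT1'.prod_left_ae, hIW1'.prod_left_ae] with y hy hTint hWint
    have hD : ∀ s : ℝ, ((s, y) : ℝ × ℝ) ∈ slitPlane := by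
      intro s hmem
      exact hy hmem.2
    have hzero : ∫ s, (W1 (s, y) + T1 (s, y)) = 0 := by
      apply integral_deriv_zero (fun s => (u (s, y)).1 * φ (s, y))
      · exact ((hcont.comp (continuous_id.prodMk continuous_const)).fst).mul
          (hφ.continuous.comp (continuous_id.prodMk continuous_const))
      · exact ((hφsliceh y).mul_left)
      · intro s _
        have hp := hD s
        have h1 : HasDerivAt (fun t => (u (t, y)).1) ((fderiv ℝ u (s, y) (1, 0)).1) s :=
          hlineu1 (s, y) hp
        have h2 : HasDerivAt (fun t => φ (t, y)) (fderiv ℝ φ (s, y) (1, 0)) s :=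
          hφline1 (s, y)
        have := h1.mul h2
        simp only [hW1def, hT1def]
        rw [hpdu1 (s, y) hp, hpdφ1 (s, y)]
        exact this
      · exact (hWint.add hTint).integrableOn
      · exact (hWint.add hTint).integrableOn
    rw [integral_add hWint hTint] at hzero
    linarith
  -- second integration by parts : over x₂ for a.e. x₁
  have hE2 : ∫ p, T2 p = - ∫ p, W2 p := by
    rw [Measure.volume_eq_prod, integral_prod _ hIT2', integral_prod _ hIW2',
      ← integral_neg]
    apply integral_congr_ae
    filter_upwards [hIT2'.prod_right_ae, hIW2'.prod_right_ae] with x hTint hWint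
    have hD : ∀ s : ℝ, s ≠ 0 → ((x, s) : ℝ × ℝ) ∈ slitPlane := by
      intro s hs hmem
      exact hs hmem.2
    have hzero : ∫ s, (W2 (x, s) + T2 (x, s)) = 0 := by
      apply integral_deriv_zero (fun s => (u (x, s)).2 * φ (x, s))
      · exact ((hcont.comp (continuous_const.prodMk continuous_id)).snd).mul
          (hφ.continuous.comp (continuous_const.prodMk continuous_id))
      · exact ((hφslicev x).mul_left)
      · intro s hs
        have hp := hD s hs
        have h1 : HasDerivAt (fun t => (u (x, t)).2) ((fderiv ℝ u (x, s) (0, 1)).2) s :=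
          hlineu2 (x, s) hp
        have h2 : HasDerivAt (fun t => φ (x, t)) (fderiv ℝ φ (x, s) (0, 1)) s :=
          hφline2 (x, s)
        have := h1.mul h2
        simp only [hW2def, hT2def]
        rw [hpdu2 (x, s) hp, hpdφ2 (x, s)]
        exact this
      · exact (hWint.add hTint).integrableOn
      · exact (hWint.add hTint).integrableOn
    rw [integral_add hWint hTint] at hzero
    linarith
  -- the divergence condition kills the remaining term
  have hsum : (∫ p, W1 p) + (∫ p, W2 p) = 0 := by
    rw [← integral_add hIW1 hIW2]
    rw [show (fun p => W1 p + W2 p) = fun p : ℝ × ℝ =>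
      (pd1 (fun y => (u y).1) p + pd2 (fun y => (u y).2) p) * φ p from by
        funext p; rw [hW1def, hW2def]; ring]
    have : ∀ᵐ p : ℝ × ℝ, (pd1 (fun y => (u y).1) p + pd2 (fun y => (u y).2) p) * φ p
        = (0 : ℝ) := by
      filter_upwards [hae] with p hp
      rw [hdiv p hp, zero_mul]
    rw [integral_congr_ae this, integral_zero]
  calc ∫ x : ℝ × ℝ, ((u x).1 * pd1 φ x + (u x).2 * pd2 φ x)
      = ∫ p, (T1 p + T2 p) := rfl
    _ = (∫ p, T1 p) + (∫ p, T2 p) := integral_add hIT1 hIT2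
    _ = (- ∫ p, W1 p) + (- ∫ p, W2 p) := by rw [hE1, hE2]
    _ = 0 := by linarith
end

section
/- Let φ : ℝ → ℝ be twice continuously differentiable with φ(r) = 1 for r ≤ 1/3 and φ(r) = 0 for r ≥ 2/3, and let β : ℝ² → ℝ be continuous with compact support. Then lim_{ε→0⁺} (1/ε²) ∫_{ℝ²} β(x) φ''(|x|/ε) dx = 2π β(0,0), where |x| = √(x₁²+x₂²). -/
open Set MeasureTheory Filter

/-- For a `C²` cutoff `φ` with `φ ≡ 1` on `(−∞,1/3]` and `φ ≡ 0` on
`[2/3,∞)`, and a continuous compactly supported `β : ℝ² → ℝ`,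
`(1/ε²) ∫_{ℝ²} β(x) φ''(|x|/ε) dx → 2π β(0,0)` as `ε → 0⁺`,
where `|x| = √(x₁²+x₂²)`. -/
theorem boundary_layer_limit_radial_second
    (φ : ℝ → ℝ) (hφ : ContDiff ℝ 2 φ)
    (hφ1 : ∀ r : ℝ, r ≤ 1 / 3 → φ r = 1)
    (hφ0 : ∀ r : ℝ, 2 / 3 ≤ r → φ r = 0)
    (β : ℝ × ℝ → ℝ) (hβ : Continuous β) (hβc : HasCompactSupport β) :
    Tendsto (fun ε : ℝ => (1 / ε ^ 2) *
        ∫ x : ℝ × ℝ, β x * deriv (deriv φ) (Real.sqrt (x.1 ^ 2 + x.2 ^ 2) / ε))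
      (nhdsWithin 0 (Ioi 0))
      (nhds (2 * Real.pi * β (0, 0))) := by
  -- smoothness facts
  have hφ11 : ContDiff ℝ (1 + 1) φ := by exact_mod_cast hφ
  have hφ' : ContDiff ℝ 1 (deriv φ) := (contDiff_succ_iff_deriv.mp hφ11).2.2
  have hd1 : Differentiable ℝ φ := (contDiff_succ_iff_deriv.mp hφ11).1
  have hd2 : Differentiable ℝ (deriv φ) := (contDiff_one_iff_deriv.mp hφ').1
  have hc1 : Continuous (deriv φ) := hd2.continuous
  have hc2 : Continuous (deriv (deriv φ)) := (contDiff_one_iff_deriv.mp hφ').2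
  -- vanishing of derivatives
  have h1r : ∀ r : ℝ, 2 / 3 < r → deriv φ r = 0 := by
    intro r hr
    have h : φ =ᶠ[nhds r] fun _ => (0 : ℝ) :=
      eventually_of_mem (Ioi_mem_nhds hr) fun s hs => hφ0 s (le_of_lt hs)
    rw [h.deriv_eq, deriv_const]
  have h2r : ∀ r : ℝ, 2 / 3 < r → deriv (deriv φ) r = 0 := by
    intro r hr
    have h : deriv φ =ᶠ[nhds r] fun _ => (0 : ℝ) :=
      eventually_of_mem (Ioi_mem_nhds hr) fun s hs => h1r s hs
    rw [h.deriv_eq, deriv_const]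
  have h2l : ∀ r : ℝ, r < 1 / 3 → deriv (deriv φ) r = 0 := by
    intro r hr
    have h1 : ∀ s : ℝ, s < 1 / 3 → deriv φ s = 0 := by
      intro s hs
      have h : φ =ᶠ[nhds s] fun _ => (1 : ℝ) :=
        eventually_of_mem (Iio_mem_nhds hs) fun t ht => hφ1 t (le_of_lt ht)
      rw [h.deriv_eq, deriv_const]
    have h : deriv φ =ᶠ[nhds r] fun _ => (0 : ℝ) :=
      eventually_of_mem (Iio_mem_nhds hr) fun s hs => h1 s hs
    rw [h.deriv_eq, deriv_const]
  -- the rescaled profile g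
  set g : ℝ × ℝ → ℝ := fun y => deriv (deriv φ) (Real.sqrt (y.1 ^ 2 + y.2 ^ 2)) with hg_def
  have hNc : Continuous fun y : ℝ × ℝ => Real.sqrt (y.1 ^ 2 + y.2 ^ 2) := by fun_prop
  have hNge : ∀ y : ℝ × ℝ, ‖y‖ ≤ Real.sqrt (y.1 ^ 2 + y.2 ^ 2) := by
    intro y
    rw [Prod.norm_def]
    apply max_le
    · rw [show ‖y.1‖ = Real.sqrt (y.1 ^ 2) by rw [Real.sqrt_sq_eq_abs, Real.norm_eq_abs]]
      exact Real.sqrt_le_sqrt (by nlinarith [sq_nonneg y.2])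
    · rw [show ‖y.2‖ = Real.sqrt (y.2 ^ 2) by rw [Real.sqrt_sq_eq_abs, Real.norm_eq_abs]]
      exact Real.sqrt_le_sqrt (by nlinarith [sq_nonneg y.1])
  have hg_cont : Continuous g := hc2.comp hNc
  have hg_supp : HasCompactSupport g := by
    apply HasCompactSupport.intro (isCompact_closedBall (0 : ℝ × ℝ) 1)
    intro y hy
    simp only [Metric.mem_closedBall, dist_zero_right, not_le] at hy
    exact h2r _ (by linarith [hNge y])
  have hg_int : Integrable g := hg_cont.integrable_of_hasCompactSupport hg_supp
  -- Step C: ∫ g = 2π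
  have hIg : (∫ y : ℝ × ℝ, g y) = 2 * Real.pi := by
    rw [← integral_comp_polarCoord_symm g]
    have hcongr : ∀ p ∈ polarCoord.target,
        p.1 • g (polarCoord.symm p)
          = (fun r => r * deriv (deriv φ) r) p.1 * (fun _ : ℝ => (1 : ℝ)) p.2 := by
      rintro ⟨r, θ⟩ hp
      rw [polarCoord_target] at hp
      have hr : 0 < r := hp.1
      have hsq : (r * Real.cos θ) ^ 2 + (r * Real.sin θ) ^ 2 = r ^ 2 := by
        linear_combination r ^ 2 * Real.sin_sq_add_cos_sq θ
      simp only [g, polarCoord_symm_apply, smul_eq_mul, hsq, Real.sqrt_sq hr.le, mul_one]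
    rw [setIntegral_congr_fun (by rw [polarCoord_target]; measurability) hcongr, polarCoord_target,
      Measure.volume_eq_prod]
    rw [setIntegral_prod_mul (L := ℝ) (fun r : ℝ => r * deriv (deriv φ) r)
      (fun _ : ℝ => (1 : ℝ)) (Ioi 0) (Ioo (-Real.pi) Real.pi)]
    have hθ : (∫ _ in Ioo (-Real.pi) Real.pi, (1 : ℝ)) = 2 * Real.pi := by
      simp [Real.volume_Ioo]
      rw [max_eq_left (by positivity)]
      ring
    rw [hθ]
    have hI : (∫ r in Ioi (0 : ℝ), r * deriv (deriv φ) r) = 1 := by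
      have hsplit : Ioc (0 : ℝ) 1 ∪ Ioi (1 : ℝ) = Ioi 0 := Ioc_union_Ioi_eq_Ioi zero_le_one
      have hcont : Continuous fun r : ℝ => r * deriv (deriv φ) r := continuous_id.mul hc2
      have hzero : ∀ r ∈ Ioi (1 : ℝ), r * deriv (deriv φ) r = 0 := by
        intro r hr
        rw [h2r r (by simpa using by linarith [mem_Ioi.mp hr]), mul_zero]
      have hint2 : IntegrableOn (fun r : ℝ => r * deriv (deriv φ) r) (Ioi 1) := by
        exact (integrableOn_zero).congr_fun (fun x hx => (hzero x hx).symm) measurableSet_Ioi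
      rw [← hsplit, setIntegral_union (Ioc_disjoint_Ioi le_rfl) measurableSet_Ioi
        (hcont.integrableOn_Ioc) hint2,
        setIntegral_eq_zero_of_forall_eq_zero hzero, add_zero,
        ← intervalIntegral.integral_of_le zero_le_one]
      have hibp := intervalIntegral.integral_mul_deriv_eq_deriv_mul
        (u := fun x : ℝ => x) (u' := fun _ => (1 : ℝ)) (v := deriv φ)
        (v' := deriv (deriv φ)) (a := 0) (b := 1)
        (fun x _ => hasDerivAt_id x)
        (fun x _ => (hd2 x).hasDerivAt)
        (intervalIntegrable_const)
        (hc2.intervalIntegrable 0 1)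
      rw [hibp, h1r 1 (by norm_num)]
      have hftc : (∫ x in (0:ℝ)..1, deriv φ x) = φ 1 - φ 0 :=
        intervalIntegral.integral_deriv_eq_sub (fun x _ => hd1 x)
          (hc1.intervalIntegrable 0 1)
      simp only [one_mul]
      rw [hftc, hφ0 1 (by norm_num), hφ1 0 (by norm_num)]
      ring
    rw [hI]; ring
  -- bound on β
  obtain ⟨C, hC⟩ := hβc.exists_bound_of_continuous hβ
  -- Step B: dominated convergence
  have key : Tendsto (fun ε : ℝ => ∫ y : ℝ × ℝ, β (ε • y) * g y)
      (nhdsWithin 0 (Ioi 0)) (nhds (∫ y : ℝ × ℝ, β 0 * g y)) := by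
    apply tendsto_integral_filter_of_dominated_convergence (fun y => C * |g y|)
    · filter_upwards with ε
      exact ((hβ.comp (continuous_id.const_smul ε)).mul hg_cont).aestronglyMeasurable
    · filter_upwards with ε
      filter_upwards with y
      rw [Real.norm_eq_abs, abs_mul]
      exact mul_le_mul_of_nonneg_right ((Real.norm_eq_abs _ ▸ hC (ε • y))) (abs_nonneg _)
    · exact hg_int.abs.const_mul C
    · filter_upwards with y
      have h0 : Tendsto (fun ε : ℝ => ε • y) (nhdsWithin 0 (Ioi 0)) (nhds (0 : ℝ × ℝ)) := by
        have : Tendsto (fun ε : ℝ => ε • y) (nhds 0) (nhds ((0 : ℝ) • y)) :=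
          (continuous_id.smul continuous_const).tendsto 0
        rw [zero_smul] at this
        exact this.mono_left nhdsWithin_le_nhds
      exact (((hβ.tendsto 0).comp h0).mul_const (g y))
  have hval : (∫ y : ℝ × ℝ, β 0 * g y) = 2 * Real.pi * β (0, 0) := by
    rw [integral_const_mul, hIg, Prod.mk_zero_zero]; ring
  rw [hval] at key
  -- Step A: identify the functions on Ioi 0
  apply key.congr'
  filter_upwards [self_mem_nhdsWithin] with ε (hε : 0 < ε)
  have hcs := MeasureTheory.Measure.integral_comp_smul (volume : Measure (ℝ × ℝ))
    (fun x => β x * deriv (deriv φ) (Real.sqrt (x.1 ^ 2 + x.2 ^ 2) / ε)) ε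
  have hfr : Module.finrank ℝ (ℝ × ℝ) = 2 := by
    simp [Module.finrank_prod]
  rw [hfr] at hcs
  have heq : ∀ y : ℝ × ℝ,
      β (ε • y) * deriv (deriv φ) (Real.sqrt ((ε • y).1 ^ 2 + (ε • y).2 ^ 2) / ε)
        = β (ε • y) * g y := by
    intro y
    congr 1
    have : (ε • y).1 ^ 2 + (ε • y).2 ^ 2 = ε ^ 2 * (y.1 ^ 2 + y.2 ^ 2) := by
      simp [Prod.smul_fst, Prod.smul_snd, smul_eq_mul]; ring
    rw [hg_def, this, Real.sqrt_mul (sq_nonneg ε), Real.sqrt_sq hε.le,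
      mul_div_cancel_left₀ _ hε.ne']
  simp only [heq] at hcs
  rw [hcs, smul_eq_mul, abs_of_nonneg (by positivity : (0:ℝ) ≤ (ε ^ 2)⁻¹), one_div]
end
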